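/- arXiv:2008.07463 — 2 statements merged into one kernel-verified Lean document; each statement's English description precedes it below -/
import Mathlib

section
/- Let φ be an LTL_P formula, M a ℤ-model, M′ the induced ℕ-model of M over Σ_φ, and let ◇_F ψ be a temporal subformula of φ. Then for every n ∈ ℕ: (1) M′,n ⊨ A₊^{◇_Fψ} if and only if M′,n ⊨ ◇_F ψ̄₊, and (2) M′,(n+1) ⊨ A₋^{◇_Fψ} if and only if (M′,n ⊨ A₋^{◇_Fψ} or M′,(n+1) ⊨ ψ̄₋). -/
/-- LTL_P formulas over propositional variables `V`:
`p | ¬φ | φ₁ ∧ φ₂ | ◯_F φ | ◯_P φ | ◇_F φ | ◇_P φ`. -/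
inductive LTLP (V : Type) : Type
  | var   : V → LTLP V
  | neg   : LTLP V → LTLP V
  | conj  : LTLP V → LTLP V → LTLP V
  | nextF : LTLP V → LTLP V
  | nextP : LTLP V → LTLP V
  | diaF  : LTLP V → LTLP V
  | diaP  : LTLP V → LTLP V
  deriving DecidableEq

/-- Satisfaction `M,n ⊨ φ` of an LTL_P formula in a ℤ-model `M : ℤ → V → Prop`. -/
def ZSat {V : Type} (M : ℤ → V → Prop) : ℤ → LTLP V → Prop
  | n, .var p    => M n p
  | n, .neg ψ    => ¬ ZSat M n ψ
  | n, .conj ψ χ => ZSat M n ψ ∧ ZSat M n χ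
  | n, .nextF ψ  => ZSat M (n + 1) ψ
  | n, .nextP ψ  => ZSat M (n - 1) ψ
  | n, .diaF ψ   => ∃ m, n ≤ m ∧ ZSat M m ψ
  | n, .diaP ψ   => ∃ m, m ≤ n ∧ ZSat M m ψ

/-- Pure-future LTL formulas (no past operators). -/
inductive LTLF (W : Type) : Type
  | var   : W → LTLF W
  | neg   : LTLF W → LTLF W
  | conj  : LTLF W → LTLF W → LTLF W
  | nextF : LTLF W → LTLF W
  | diaF  : LTLF W → LTLF W
  deriving DecidableEq

/-- Satisfaction `N,n ⊨ φ` of a pure-future formula in an ℕ-model `N : ℕ → W → Prop`. -/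
def NSat {W : Type} (N : ℕ → W → Prop) : ℕ → LTLF W → Prop
  | n, .var p    => N n p
  | n, .neg ψ    => ¬ NSat N n ψ
  | n, .conj ψ χ => NSat N n ψ ∧ NSat N n χ
  | n, .nextF ψ  => NSat N (n + 1) ψ
  | n, .diaF ψ   => ∃ m, n ≤ m ∧ NSat N m ψ

/-- The extended alphabet Σ_φ: variables `p₊`, `p₋` for propositional variables `p`,
and `A₊^{Oψ}`, `A₋^{Oψ}` indexed by (temporal) formulas `Oψ`. -/
inductive Alph (V : Type) : Type
  | pos  : V → Alph V
  | negv : V → Alph V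
  | Apos : LTLP V → Alph V
  | Aneg : LTLP V → Alph V
  deriving DecidableEq

/-- `ξ.isTemporal` holds iff the outermost symbol of `ξ` is a temporal operator. -/
def LTLP.isTemporal {V : Type} : LTLP V → Prop
  | .nextF _ => True
  | .nextP _ => True
  | .diaF _  => True
  | .diaP _  => True
  | _        => False

/-- The translation `ξ̄_∗` (`s = true` for `∗ = +`, `s = false` for `∗ = −`):
a propositional formula over `Alph V`. -/
def bar {V : Type} (s : Bool) : LTLP V → LTLF (Alph V)
  | .var p    => .var (if s then .pos p else .negv p)
  | .neg ψ    => .neg (bar s ψ)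
  | .conj ψ χ => .conj (bar s ψ) (bar s χ)
  | .nextF ψ  => .var (if s then .Apos (.nextF ψ) else .Aneg (.nextF ψ))
  | .nextP ψ  => .var (if s then .Apos (.nextP ψ) else .Aneg (.nextP ψ))
  | .diaF ψ   => .var (if s then .Apos (.diaF ψ) else .Aneg (.diaF ψ))
  | .diaP ψ   => .var (if s then .Apos (.diaP ψ) else .Aneg (.diaP ψ))

/-- The set `sub φ` of subformulas of `φ`. -/
def subFmls {V : Type} : LTLP V → Set (LTLP V)
  | .var p    => {LTLP.var p}
  | .neg ψ    => insert (.neg ψ) (subFmls ψ)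
  | .conj ψ χ => insert (.conj ψ χ) (subFmls ψ ∪ subFmls χ)
  | .nextF ψ  => insert (.nextF ψ) (subFmls ψ)
  | .nextP ψ  => insert (.nextP ψ) (subFmls ψ)
  | .diaF ψ   => insert (.diaF ψ) (subFmls ψ)
  | .diaP ψ   => insert (.diaP ψ) (subFmls ψ)

/-- The induced ℕ-model `M′` over `Alph V` of a ℤ-model `M`. -/
def induced {V : Type} (M : ℤ → V → Prop) : ℕ → Alph V → Prop
  | n, .pos p  => M (n : ℤ) p
  | n, .negv p => M (-(n : ℤ)) p
  | n, .Apos ξ => ZSat M (n : ℤ) ξ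
  | n, .Aneg ξ => ZSat M (-(n : ℤ)) ξ

/-- The conjunct of part (iii) of the pure-future translation associated with a temporal
subformula, evaluated at time `n` (trivial for non-temporal formulas). -/
def ClauseAt {V : Type} (N : ℕ → Alph V → Prop) (n : ℕ) : LTLP V → Prop
  | .nextF ψ =>
      (N (n + 1) (.Aneg (.nextF ψ)) ↔ NSat N n (bar false ψ)) ∧
      (N n (.Apos (.nextF ψ)) ↔ NSat N (n + 1) (bar true ψ))
  | .nextP ψ =>
      (N (n + 1) (.Apos (.nextP ψ)) ↔ NSat N n (bar true ψ)) ∧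
      (N n (.Aneg (.nextP ψ)) ↔ NSat N (n + 1) (bar false ψ))
  | .diaF ψ =>
      (N (n + 1) (.Aneg (.diaF ψ)) ↔ (N n (.Aneg (.diaF ψ)) ∨ NSat N (n + 1) (bar false ψ))) ∧
      (N n (.Apos (.diaF ψ)) ↔ ∃ m, n ≤ m ∧ NSat N m (bar true ψ))
  | .diaP ψ =>
      (N (n + 1) (.Apos (.diaP ψ)) ↔ (N n (.Apos (.diaP ψ)) ∨ NSat N (n + 1) (bar true ψ))) ∧
      (N n (.Aneg (.diaP ψ)) ↔ ∃ m, n ≤ m ∧ NSat N m (bar false ψ))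
  | _ => True

/-- `N,0 ⊨ φ^ℕ`: satisfaction at time 0 of the pure-future translation of `φ`, i.e. the
conjunction of (i) `φ̄₊`, (ii) `v₊ ↔ v₋` at time 0 for all variable pairs of Σ_φ, and
(iii) `□_F` of the clauses for all temporal subformulas of `φ` (so: the clauses hold at all
`n ∈ ℕ`). -/
def SatPF {V : Type} (N : ℕ → Alph V → Prop) (φ : LTLP V) : Prop :=
  NSat N 0 (bar true φ) ∧
  (∀ p : V, LTLP.var p ∈ subFmls φ → (N 0 (.pos p) ↔ N 0 (.negv p))) ∧
  (∀ ξ ∈ subFmls φ, ξ.isTemporal → (N 0 (.Apos ξ) ↔ N 0 (.Aneg ξ))) ∧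
  (∀ n : ℕ, ∀ ξ ∈ subFmls φ, ClauseAt N n ξ)

lemma bar_sat {V : Type} (M : ℤ → V → Prop) (ψ : LTLP V) (s : Bool) (n : ℕ) :
    NSat (induced M) n (bar s ψ) ↔ ZSat M (if s then (n : ℤ) else -(n : ℤ)) ψ := by
  induction ψ generalizing n with
  | var p => cases s <;> simp [bar, NSat, induced, ZSat]
  | neg ψ ih => simp [bar, NSat, ZSat, ih]
  | conj ψ χ ih1 ih2 => simp [bar, NSat, ZSat, ih1, ih2]
  | nextF ψ _ => cases s <;> simp [bar, NSat, induced]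
  | nextP ψ _ => cases s <;> simp [bar, NSat, induced]
  | diaF ψ _ => cases s <;> simp [bar, NSat, induced]
  | diaP ψ _ => cases s <;> simp [bar, NSat, induced]

lemma bar_sat_true {V : Type} (M : ℤ → V → Prop) (ψ : LTLP V) (n : ℕ) :
    NSat (induced M) n (bar true ψ) ↔ ZSat M (n : ℤ) ψ := by
  simpa using bar_sat M ψ true n

lemma bar_sat_false {V : Type} (M : ℤ → V → Prop) (ψ : LTLP V) (n : ℕ) :
    NSat (induced M) n (bar false ψ) ↔ ZSat M (-(n : ℤ)) ψ := by
  simpa using bar_sat M ψ false n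

/-- For a temporal subformula `◇_F ψ` of `φ` and the induced ℕ-model `M′`
of a ℤ-model `M`, for every `n ∈ ℕ`:
(1) `M′,n ⊨ A₊^{◇_Fψ}` iff `M′,n ⊨ ◇_F ψ̄₊`, and
(2) `M′,n+1 ⊨ A₋^{◇_Fψ}` iff (`M′,n ⊨ A₋^{◇_Fψ}` or `M′,n+1 ⊨ ψ̄₋`). -/
theorem induced_model_diaF_clauses {V : Type} (φ : LTLP V) (M : ℤ → V → Prop)
    (ψ : LTLP V) (h : LTLP.diaF ψ ∈ subFmls φ) :
    ∀ n : ℕ,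
      (induced M n (.Apos (.diaF ψ)) ↔ NSat (induced M) n (.diaF (bar true ψ))) ∧
      (induced M (n + 1) (.Aneg (.diaF ψ)) ↔
        (induced M n (.Aneg (.diaF ψ)) ∨ NSat (induced M) (n + 1) (bar false ψ))) := by
  intro n
  constructor
  · show ZSat M (n : ℤ) (.diaF ψ) ↔ _
    simp only [ZSat, NSat]
    constructor
    · rintro ⟨m, hm, hsat⟩
      refine ⟨m.toNat, ?_, ?_⟩
      · omega
      · rw [bar_sat_true]
        have : (m.toNat : ℤ) = m := by omega
        rwa [this]
    · rintro ⟨m, hm, hsat⟩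
      rw [bar_sat_true] at hsat
      exact ⟨m, by omega, hsat⟩
  · show ZSat M (-((n:ℕ)+1 : ℕ) : ℤ) (.diaF ψ) ↔ ZSat M (-(n:ℤ)) (.diaF ψ) ∨ _
    rw [bar_sat_false]
    simp only [ZSat]
    constructor
    · rintro ⟨m, hm, hsat⟩
      rcases eq_or_lt_of_le hm with h' | h'
      · right; rwa [← h'] at hsat
      · left; exact ⟨m, by omega, hsat⟩
    · rintro (⟨m, hm, hsat⟩ | hsat)
      · exact ⟨m, by omega, hsat⟩
      · exact ⟨_, le_refl _, hsat⟩
end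

section
/- Let φ be an LTL_P formula and let M′ be an ℕ-model over Σ_φ with M′,0 ⊨ φ^ℕ. Define the ℤ-model M by: for each propositional variable p occurring in φ and each n ∈ ℤ, M n p holds iff (M′,n ⊨ p₊ when n ≥ 0, and M′,−n ⊨ p₋ when n < 0). Then for every subformula ψ ∈ sub(φ) and every n ∈ ℤ: M,n ⊨ ψ if and only if (M′,n ⊨ ψ̄₊ when n ≥ 0, and M′,−n ⊨ ψ̄₋ when n < 0). -/
@[simp] lemma mem_subFmls_self {V : Type} (ψ : LTLP V) : ψ ∈ subFmls ψ := by
  cases ψ <;> simp [subFmls]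

lemma subFmls_trans {V : Type} {φ ξ : LTLP V} (h : ξ ∈ subFmls φ) :
    subFmls ξ ⊆ subFmls φ := by
  induction φ with
  | var p =>
    simp [subFmls] at h; subst h; exact subset_rfl
  | neg ψ ih =>
    rcases h with rfl | h
    · exact subset_rfl
    · exact (ih h).trans (Set.subset_insert _ _)
  | conj ψ χ ih1 ih2 =>
    rcases h with rfl | h | h
    · exact subset_rfl
    · exact (ih1 h).trans ((Set.subset_union_left).trans (Set.subset_insert _ _))
    · exact (ih2 h).trans ((Set.subset_union_right).trans (Set.subset_insert _ _))
  | nextF ψ ih =>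
    rcases h with rfl | h
    · exact subset_rfl
    · exact (ih h).trans (Set.subset_insert _ _)
  | nextP ψ ih =>
    rcases h with rfl | h
    · exact subset_rfl
    · exact (ih h).trans (Set.subset_insert _ _)
  | diaF ψ ih =>
    rcases h with rfl | h
    · exact subset_rfl
    · exact (ih h).trans (Set.subset_insert _ _)
  | diaP ψ ih =>
    rcases h with rfl | h
    · exact subset_rfl
    · exact (ih h).trans (Set.subset_insert _ _)

/-- At time 0, the positive and negative translations agree. -/
lemma bar_zero {V : Type} {φ : LTLP V} {N : ℕ → Alph V → Prop} (hN : SatPF N φ) :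
    ∀ ψ ∈ subFmls φ, (NSat N 0 (bar true ψ) ↔ NSat N 0 (bar false ψ)) := by
  intro ψ
  induction ψ with
  | var p => intro hψ; simpa [bar, NSat] using hN.2.1 p hψ
  | neg ψ ih =>
    intro hψ
    have hψ' : ψ ∈ subFmls φ := subFmls_trans hψ (by simp [subFmls])
    simp only [bar, NSat]
    rw [ih hψ']
  | conj ψ χ ih1 ih2 =>
    intro hψ
    have h1 : ψ ∈ subFmls φ := subFmls_trans hψ (by simp [subFmls])
    have h2 : χ ∈ subFmls φ := subFmls_trans hψ (by simp [subFmls])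
    simp only [bar, NSat]
    rw [ih1 h1, ih2 h2]
  | nextF ψ _ =>
    intro hψ; simpa [bar, NSat] using hN.2.2.1 _ hψ (by trivial)
  | nextP ψ _ =>
    intro hψ; simpa [bar, NSat] using hN.2.2.1 _ hψ (by trivial)
  | diaF ψ _ =>
    intro hψ; simpa [bar, NSat] using hN.2.2.1 _ hψ (by trivial)
  | diaP ψ _ =>
    intro hψ; simpa [bar, NSat] using hN.2.2.1 _ hψ (by trivial)

/-- Unrolling a one-step recurrence on ℕ. -/
lemma unroll (f P : ℕ → Prop) (h : ∀ j, f (j + 1) ↔ f j ∨ P (j + 1)) :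
    ∀ k, f k ↔ f 0 ∨ ∃ j, 1 ≤ j ∧ j ≤ k ∧ P j := by
  intro k
  induction k with
  | zero =>
    constructor
    · exact Or.inl
    · rintro (h0 | ⟨j, h1, h2, _⟩)
      · exact h0
      · omega
  | succ k ih =>
    rw [h k, ih]
    constructor
    · rintro ((h0 | ⟨j, h1, h2, hP⟩) | hP)
      · exact Or.inl h0
      · exact Or.inr ⟨j, h1, by omega, hP⟩
      · exact Or.inr ⟨k + 1, by omega, le_refl _, hP⟩
    · rintro (h0 | ⟨j, h1, h2, hP⟩)
      · exact Or.inl (Or.inl h0)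
      · rcases Nat.lt_or_ge j (k + 1) with hlt | hge
        · exact Or.inl (Or.inr ⟨j, h1, by omega, hP⟩)
        · have hj : j = k + 1 := by omega
          subst hj; exact Or.inr hP

/-- Restatement of the inductive hypothesis at natural-number points. -/
lemma ih_nat {V : Type} {φ : LTLP V} {N : ℕ → Alph V → Prop} (hN : SatPF N φ)
    {M : ℤ → V → Prop} {ψ : LTLP V} (hψ : ψ ∈ subFmls φ)
    (ih : ∀ n : ℤ, ZSat M n ψ ↔
      if 0 ≤ n then NSat N n.toNat (bar true ψ) else NSat N (-n).toNat (bar false ψ)) :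
    (∀ k : ℕ, ZSat M (k : ℤ) ψ ↔ NSat N k (bar true ψ)) ∧
    (∀ k : ℕ, ZSat M (-(k : ℤ)) ψ ↔ NSat N k (bar false ψ)) := by
  have hP : ∀ k : ℕ, ZSat M (k : ℤ) ψ ↔ NSat N k (bar true ψ) := by
    intro k
    have h := ih (k : ℤ)
    rw [if_pos (Int.natCast_nonneg k)] at h
    simpa using h
  refine ⟨hP, ?_⟩
  intro k
  match k with
  | 0 => simpa using (hP 0).trans (bar_zero hN ψ hψ)
  | (k + 1) =>
    have h := ih (-((k : ℤ) + 1))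
    rw [if_neg (by omega)] at h
    have ht : (-(-((k : ℤ) + 1))).toNat = k + 1 := by omega
    rw [ht] at h
    exact_mod_cast h

/-- Let `N` be an ℕ-model over Σ_φ with `N,0 ⊨ φ^ℕ`, and let `M` be the
ℤ-model defined on the propositional variables occurring in `φ` by
`M n p` iff (`N,n ⊨ p₊` when `n ≥ 0`, and `N,−n ⊨ p₋` when `n < 0`). Then for every
subformula `ψ` of `φ` and every `n ∈ ℤ`: `M,n ⊨ ψ` iff (`N,n ⊨ ψ̄₊` when `n ≥ 0`, and
`N,−n ⊨ ψ̄₋` when `n < 0`). -/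
theorem zmodel_truth_lemma {V : Type} (φ : LTLP V) (N : ℕ → Alph V → Prop)
    (hN : SatPF N φ) (M : ℤ → V → Prop)
    (hM : ∀ p : V, LTLP.var p ∈ subFmls φ → ∀ n : ℤ,
      (M n p ↔ if 0 ≤ n then N n.toNat (.pos p) else N (-n).toNat (.negv p))) :
    ∀ ψ ∈ subFmls φ, ∀ n : ℤ,
      (ZSat M n ψ ↔
        if 0 ≤ n then NSat N n.toNat (bar true ψ) else NSat N (-n).toNat (bar false ψ)) := by
  intro ψ
  induction ψ with
  | var p =>
    intro hψ n
    have := hM p hψ n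
    simp only [ZSat, bar, NSat]
    split <;> simp_all
  | neg ψ ih =>
    intro hψ n
    have hψ' : ψ ∈ subFmls φ := subFmls_trans hψ (by simp [subFmls])
    rcases le_or_gt 0 n with h | h
    · simp only [ZSat, bar, NSat, ih hψ' n, if_pos h]
    · simp only [ZSat, bar, NSat, ih hψ' n, if_neg h.not_ge]
  | conj ψ χ ih1 ih2 =>
    intro hψ n
    have h1 : ψ ∈ subFmls φ := subFmls_trans hψ (by simp [subFmls])
    have h2 : χ ∈ subFmls φ := subFmls_trans hψ (by simp [subFmls])
    rcases le_or_gt 0 n with h | h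
    · simp only [ZSat, bar, NSat, ih1 h1 n, ih2 h2 n, if_pos h]
    · simp only [ZSat, bar, NSat, ih1 h1 n, ih2 h2 n, if_neg h.not_ge]
  | nextF ψ ih =>
    intro hψ n
    have hψ' : ψ ∈ subFmls φ := subFmls_trans hψ (by simp [subFmls])
    obtain ⟨ihP, ihN⟩ := ih_nat hN hψ' (ih hψ')
    have hcl : ∀ k, ClauseAt N k (.nextF ψ) := fun k => hN.2.2.2 k _ hψ
    simp only [ZSat, bar, NSat, if_true]
    rcases le_or_gt 0 n with h | h
    · obtain ⟨k, rfl⟩ : ∃ k : ℕ, n = (k : ℤ) := ⟨n.toNat, by omega⟩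
      rw [if_pos h]
      have ht : ((k : ℤ)).toNat = k := by omega
      rw [ht]
      have h1 : ((k : ℤ) + 1) = ((k + 1 : ℕ) : ℤ) := by omega
      rw [h1, ihP (k + 1)]
      exact ((hcl k).2).symm
    · obtain ⟨k, rfl⟩ : ∃ k : ℕ, n = -((k : ℤ) + 1) := ⟨(-n - 1).toNat, by omega⟩
      rw [if_neg (by omega)]
      have ht : (-(-((k : ℤ) + 1))).toNat = k + 1 := by omega
      rw [ht]
      have h1 : (-((k : ℤ) + 1) + 1) = -((k : ℕ) : ℤ) := by omega
      rw [h1, ihN k]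
      exact ((hcl k).1).symm
  | nextP ψ ih =>
    intro hψ n
    have hψ' : ψ ∈ subFmls φ := subFmls_trans hψ (by simp [subFmls])
    obtain ⟨ihP, ihN⟩ := ih_nat hN hψ' (ih hψ')
    have hcl : ∀ k, ClauseAt N k (.nextP ψ) := fun k => hN.2.2.2 k _ hψ
    simp only [ZSat, bar, NSat, if_true]
    rcases le_or_gt 0 n with h | h
    · obtain ⟨k, rfl⟩ : ∃ k : ℕ, n = (k : ℤ) := ⟨n.toNat, by omega⟩
      rw [if_pos h]
      have ht : ((k : ℤ)).toNat = k := by omega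
      rw [ht]
      match k with
      | 0 =>
        have h1 : ((0 : ℕ) : ℤ) - 1 = -((1 : ℕ) : ℤ) := by omega
        rw [h1, ihN 1]
        have hm : N 0 (.Apos (.nextP ψ)) ↔ N 0 (.Aneg (.nextP ψ)) :=
          hN.2.2.1 _ hψ (by trivial)
        rw [hm]
        exact ((hcl 0).2).symm
      | (j + 1) =>
        have h1 : (((j + 1 : ℕ)) : ℤ) - 1 = ((j : ℕ) : ℤ) := by omega
        rw [h1, ihP j]
        exact ((hcl j).1).symm
    · obtain ⟨k, rfl⟩ : ∃ k : ℕ, n = -((k : ℤ) + 1) := ⟨(-n - 1).toNat, by omega⟩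
      rw [if_neg (by omega)]
      have ht : (-(-((k : ℤ) + 1))).toNat = k + 1 := by omega
      rw [ht]
      have h1 : (-((k : ℤ) + 1) - 1) = -((k + 2 : ℕ) : ℤ) := by omega
      rw [h1, ihN (k + 2)]
      exact ((hcl (k + 1)).2).symm
  | diaF ψ ih =>
    intro hψ n
    have hψ' : ψ ∈ subFmls φ := subFmls_trans hψ (by simp [subFmls])
    obtain ⟨ihP, ihN⟩ := ih_nat hN hψ' (ih hψ')
    have hcl : ∀ k, ClauseAt N k (.diaF ψ) := fun k => hN.2.2.2 k _ hψ
    simp only [ZSat, bar, NSat, Bool.false_eq_true, if_false, if_true]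
    rcases le_or_gt 0 n with h | h
    · obtain ⟨k, rfl⟩ : ∃ k : ℕ, n = (k : ℤ) := ⟨n.toNat, by omega⟩
      rw [if_pos h]
      have ht : ((k : ℤ)).toNat = k := by omega
      rw [ht, (hcl k).2]
      constructor
      · rintro ⟨m, hm1, hm2⟩
        obtain ⟨j, rfl⟩ : ∃ j : ℕ, m = (j : ℤ) := ⟨m.toNat, by omega⟩
        exact ⟨j, by omega, (ihP j).mp hm2⟩
      · rintro ⟨j, hj1, hj2⟩
        exact ⟨(j : ℤ), by omega, (ihP j).mpr hj2⟩
    · obtain ⟨k, rfl⟩ : ∃ k : ℕ, n = -((k : ℤ) + 1) := ⟨(-n - 1).toNat, by omega⟩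
      rw [if_neg (by omega)]
      have ht : (-(-((k : ℤ) + 1))).toNat = k + 1 := by omega
      rw [ht]
      have hu := unroll (fun j => N j (.Aneg (.diaF ψ))) (fun j => NSat N j (bar false ψ))
        (fun j => (hcl j).1) (k + 1)
      rw [hu]
      have h0 : N 0 (.Aneg (.diaF ψ)) ↔ ∃ j : ℕ, NSat N j (bar true ψ) := by
        rw [← hN.2.2.1 _ hψ (by trivial)]
        rw [(hcl 0).2]
        simp
      rw [h0]
      constructor
      · rintro ⟨m, hm1, hm2⟩
        rcases le_or_gt 0 m with hm | hm
        · obtain ⟨j, rfl⟩ : ∃ j : ℕ, m = (j : ℤ) := ⟨m.toNat, by omega⟩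
          exact Or.inl ⟨j, (ihP j).mp hm2⟩
        · obtain ⟨j, rfl⟩ : ∃ j : ℕ, m = -((j : ℤ)) := ⟨(-m).toNat, by omega⟩
          exact Or.inr ⟨j, by omega, by omega, (ihN j).mp hm2⟩
      · rintro (⟨j, hj⟩ | ⟨j, hj1, hj2, hj⟩)
        · exact ⟨(j : ℤ), by omega, (ihP j).mpr hj⟩
        · exact ⟨-((j : ℤ)), by omega, (ihN j).mpr hj⟩
  | diaP ψ ih =>
    intro hψ n
    have hψ' : ψ ∈ subFmls φ := subFmls_trans hψ (by simp [subFmls])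
    obtain ⟨ihP, ihN⟩ := ih_nat hN hψ' (ih hψ')
    have hcl : ∀ k, ClauseAt N k (.diaP ψ) := fun k => hN.2.2.2 k _ hψ
    simp only [ZSat, bar, NSat, Bool.false_eq_true, if_false, if_true]
    rcases le_or_gt 0 n with h | h
    · obtain ⟨k, rfl⟩ : ∃ k : ℕ, n = (k : ℤ) := ⟨n.toNat, by omega⟩
      rw [if_pos h]
      have ht : ((k : ℤ)).toNat = k := by omega
      rw [ht]
      have hu := unroll (fun j => N j (.Apos (.diaP ψ))) (fun j => NSat N j (bar true ψ))
        (fun j => (hcl j).1) k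
      rw [hu]
      have h0 : N 0 (.Apos (.diaP ψ)) ↔ ∃ j : ℕ, NSat N j (bar false ψ) := by
        rw [hN.2.2.1 _ hψ (by trivial)]
        rw [(hcl 0).2]
        simp
      rw [h0]
      constructor
      · rintro ⟨m, hm1, hm2⟩
        rcases le_or_gt m 0 with hm | hm
        · obtain ⟨j, rfl⟩ : ∃ j : ℕ, m = -((j : ℤ)) := ⟨(-m).toNat, by omega⟩
          exact Or.inl ⟨j, (ihN j).mp hm2⟩
        · obtain ⟨j, rfl⟩ : ∃ j : ℕ, m = (j : ℤ) := ⟨m.toNat, by omega⟩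
          exact Or.inr ⟨j, by omega, by omega, (ihP j).mp hm2⟩
      · rintro (⟨j, hj⟩ | ⟨j, hj1, hj2, hj⟩)
        · exact ⟨-((j : ℤ)), by omega, (ihN j).mpr hj⟩
        · exact ⟨(j : ℤ), by omega, (ihP j).mpr hj⟩
    · obtain ⟨k, rfl⟩ : ∃ k : ℕ, n = -((k : ℤ) + 1) := ⟨(-n - 1).toNat, by omega⟩
      rw [if_neg (by omega)]
      have ht : (-(-((k : ℤ) + 1))).toNat = k + 1 := by omega
      rw [ht, (hcl (k + 1)).2]
      constructor
      · rintro ⟨m, hm1, hm2⟩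
        obtain ⟨j, rfl⟩ : ∃ j : ℕ, m = -((j : ℤ)) := ⟨(-m).toNat, by omega⟩
        exact ⟨j, by omega, (ihN j).mp hm2⟩
      · rintro ⟨j, hj1, hj2⟩
        exact ⟨-((j : ℤ)), by omega, (ihN j).mpr hj2⟩
end
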